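/- Let σ_1 ≥ ... ≥ σ_p ≥ 0, r ≤ p, f ∈ [0,2], and s = r(1 − f/2) with s ≤ r an integer. Define E_rank² = Σ_{i=s+1}^{p} σ_i² and E_out² = f·Σ_{i=1}^{r} σ_i² + Σ_{i=r+1}^{p} σ_i². Then E_out² − E_rank² ≥ 0, i.e., the rank-masking error is at most the output-masking error lower bound. -/

import Mathlib

open Finset

/-!
Write `T = ∑_{i<r} σ i ^ 2` and `B = ∑_{s≤i<r} σ i ^ 2`, so that `E_out² − E_rank² = f T − B`.
Since the `σ i ^ 2` are nonincreasing, the average of the last `r − s` of them is at most the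
average of all `r` (Chebyshev's sum inequality), i.e. `r B ≤ (r − s) T`. Hence
`f T = 2 (r − s) T / r ≥ 2 B ≥ B`.
-/

theorem card_mul_sum_Ico_le_sum_mul_card {α : Type*} [Semiring α] [LinearOrder α]
    [IsStrictOrderedRing α] [ExistsAddOfLE α] {g : ℕ → α} {r : ℕ} (s : ℕ)
    (hg : AntitoneOn g (range r)) :
    (r : α) * ∑ i ∈ Ico s r, g i ≤ (∑ i ∈ range r, g i) * (r - s : ℕ) := by
  have hind : MonotoneOn (fun i => if s ≤ i then (1 : α) else 0) (range r) := by
    intro i _ j _ hij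
    dsimp only
    split_ifs with hi hj <;> first | exact (hj (hi.trans hij)).elim | norm_num
  have hfilter : (range r).filter (s ≤ ·) = Ico s r := by
    ext i
    simp [and_comm]
  simpa [mul_ite, ← sum_filter, hfilter] using
    (hg.antivaryOn hind).card_mul_sum_le_sum_mul_sum

theorem two_mul_sum_Ico_le {g : ℕ → ℝ} {r s : ℕ} (hsr : s ≤ r) (hg : AntitoneOn g (range r)) :
    2 * ∑ i ∈ Ico s r, g i ≤ 2 * (1 - (s : ℝ) / r) * ∑ i ∈ range r, g i := by
  rcases r.eq_zero_or_pos with rfl | hr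
  · simp
  have hr' : (0 : ℝ) < r := by exact_mod_cast hr
  have key := card_mul_sum_Ico_le_sum_mul_card s hg
  rw [Nat.cast_sub hsr, ← le_div_iff₀' hr'] at key
  calc 2 * ∑ i ∈ Ico s r, g i ≤ 2 * ((∑ i ∈ range r, g i) * (r - s) / r) := by gcongr
    _ = 2 * (1 - (s : ℝ) / r) * ∑ i ∈ range r, g i := by
      rw [one_sub_div hr'.ne']
      ring

theorem AntitoneOn.sq {σ : ℕ → ℝ} {t : Set ℕ} (h0 : ∀ i ∈ t, 0 ≤ σ i) (h : AntitoneOn σ t) :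
    AntitoneOn (fun i => σ i ^ 2) t :=
  fun _ hi _ hj hij => pow_le_pow_left₀ (h0 _ hj) (h hi hj hij) 2

theorem rank_mask_error_le_output_mask_general (p r s : ℕ) (f : ℝ) (σ : ℕ → ℝ)
    (hsr : s ≤ r) (hrp : r ≤ p)
    (hnonneg : ∀ i, i < p → 0 ≤ σ i)
    (hmono : ∀ i j, i ≤ j → j < p → σ j ≤ σ i)
    (hf : f = 2 * (1 - (s : ℝ) / r)) :
    (0 ≤ f ∧ f ≤ 2) ∧
    (f * ∑ i ∈ Finset.range r, (σ i) ^ 2 + ∑ i ∈ Finset.Ico r p, (σ i) ^ 2)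
      - (∑ i ∈ Finset.Ico s p, (σ i) ^ 2) ≥ 0 := by
  have hdiv_le_one : (s : ℝ) / r ≤ 1 := div_le_one_of_le₀ (by exact_mod_cast hsr) r.cast_nonneg
  have hdiv_nonneg : 0 ≤ (s : ℝ) / r := by positivity
  refine ⟨⟨by rw [hf]; linarith, by rw [hf]; linarith⟩, ?_⟩
  have hlt : ∀ i ∈ (range r : Set ℕ), i < p := fun i hi => (mem_range.1 hi).trans_le hrp
  have hanti : AntitoneOn (fun i => σ i ^ 2) (range r) :=
    AntitoneOn.sq (fun i hi => hnonneg i (hlt i hi)) fun i _ j hj hij => hmono i j hij (hlt j hj)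
  have hB : 0 ≤ ∑ i ∈ Ico s r, σ i ^ 2 := sum_nonneg fun i _ => sq_nonneg (σ i)
  rw [← sum_Ico_consecutive _ hsr hrp, hf]
  linarith [two_mul_sum_Ico_le hsr hanti]

/-- With `σ_1 ≥ ... ≥ σ_p ≥ 0`, `s ≤ r ≤ p`, `f = 2(1 − s/r) ∈ [0,2]`, the
rank-masking error `E_rank² = ∑_{i>s} σ i ^ 2` is at most the output-masking
error lower bound `E_out² = f·∑_{i≤r} σ i ^ 2 + ∑_{i>r} σ i ^ 2`. -/
theorem rank_mask_error_le_output_mask (p r s : ℕ) (f : ℝ) (σ : ℕ → ℝ)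
    (hr : 0 < r) (hsr : s ≤ r) (hrp : r ≤ p)
    (hnonneg : ∀ i, i < p → 0 ≤ σ i)
    (hmono : ∀ i j, i ≤ j → j < p → σ j ≤ σ i)
    (hf : f = 2 * (1 - (s : ℝ) / r)) :
    (0 ≤ f ∧ f ≤ 2) ∧
    (f * ∑ i ∈ Finset.range r, (σ i) ^ 2 + ∑ i ∈ Finset.Ico r p, (σ i) ^ 2)
      - (∑ i ∈ Finset.Ico s p, (σ i) ^ 2) ≥ 0 :=
  rank_mask_error_le_output_mask_general p r s f σ hsr hrp hnonneg hmono hf
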